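/- Let E be a Dedekind complete vector lattice and let (T_n) be a sequence of orthomorphisms of E such that for every x ∈ E the sequence (T_n x) is order convergent in E. Then the map T : E → E defined by Tx = o-lim T_n x is an orthomorphism of E. -/

import Mathlib

/-!
Linearity and band preservation pass to order limits directly. Order boundedness needs an
estimate uniform in `n`: an orthomorphism satisfies `|T y| ≤ 2 |T x|` whenever `|y| ≤ x`, so on
`[a, b]` every `T n` is bounded by `2 |T n e|` with `e = |a| ⊔ |b|`, and the order convergent
sequence `(T n e)` is order bounded.

The estimate comes from `T y ≤ (T x)⁺` for `0 ≤ y ≤ x`. By a Freudenthal-type decomposition,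
`n • y` is a sum of `n` components `p` of `x` plus an error in `[0, x]`; band preservation gives
`T p ≤ (T x)⁺` for every component `p`, so `n • (T y - (T x)⁺)` is bounded by an upper bound of
`T` on `[0, x]`, and a Dedekind complete space is Archimedean.
-/

variable (E : Type*) [AddCommGroup E] [ConditionallyCompleteLattice E] [Module ℝ E]
  [CovariantClass E E (· + ·) (· ≤ ·)] [PosSMulMono ℝ E]

/-- The order on order bounded operators: `A ≤ B` iff `A x ≤ B x` for all `x ≥ 0`. -/
def opLE (A B : E →ₗ[ℝ] E) : Prop := ∀ x : E, 0 ≤ x → A x ≤ B x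

/-- An operator is order bounded when it maps order bounded sets to order bounded sets. -/
def IsOrderBoundedOp (T : E →ₗ[ℝ] E) : Prop :=
  ∀ a b : E, ∃ c d : E, ∀ x : E, a ≤ x → x ≤ b → c ≤ T x ∧ T x ≤ d

/-- Band preserving: `T x` lies in the band generated by `x`; equivalently `T x ⊥ y`
whenever `x ⊥ y`. -/
def IsBandPreserving (T : E →ₗ[ℝ] E) : Prop :=
  ∀ x y : E, |x| ⊓ |y| = 0 → |T x| ⊓ |y| = 0

/-- An orthomorphism is an order bounded band preserving linear operator. -/
def IsOrthomorphism (T : E →ₗ[ℝ] E) : Prop :=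
  IsOrderBoundedOp E T ∧ IsBandPreserving E T

/-- Membership in the band generated by a set `S` (in an Archimedean vector lattice this is
the double disjoint complement of `S`). -/
def memBandGen (S : Set E) (w : E) : Prop :=
  ∀ u : E, (∀ s ∈ S, |u| ⊓ |s| = 0) → |u| ⊓ |w| = 0

/-- `P` is the band projection onto the band `B`: it maps into `B` and `x - P x` is
disjoint from `B` for every `x`. -/
def IsBandProjectionOnto (B : Set E) (P : E →ₗ[ℝ] E) : Prop :=
  (∀ x : E, P x ∈ B) ∧ (∀ x : E, ∀ b ∈ B, |x - P x| ⊓ |b| = 0)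

/-- Order convergence of a net: there is a downward directed set `D` with infimum `0`
such that the net is eventually dominated by every member of `D`. -/
def OrderConvNet {ι : Type*} [Preorder ι] (y : ι → E) (l : E) : Prop :=
  ∃ D : Set E, D.Nonempty ∧ DirectedOn (· ≥ ·) D ∧ IsGLB D 0 ∧
    ∀ d ∈ D, ∃ i₀ : ι, ∀ i : ι, i₀ ≤ i → |y i - l| ≤ d

/-- Unbounded order convergence of a net. -/
def UOConvNet {ι : Type*} [Preorder ι] (y : ι → E) (l : E) : Prop :=
  ∀ u : E, 0 ≤ u → OrderConvNet E (fun i => |y i - l| ⊓ u) 0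

/-- Order convergence of a net of operators, in the operator order of the order bounded
operators: there is a downward directed set `D` of operators whose infimum among the
order bounded operators is `0`, eventually dominating `|T i - L|`. -/
def OpOrderConvNet {ι : Type*} [Preorder ι] (T : ι → E →ₗ[ℝ] E) (L : E →ₗ[ℝ] E) : Prop :=
  ∃ D : Set (E →ₗ[ℝ] E), D.Nonempty ∧
    DirectedOn (fun A B => opLE E B A) D ∧
    (∀ d ∈ D, opLE E 0 d) ∧
    (∀ C : E →ₗ[ℝ] E, IsOrderBoundedOp E C → (∀ d ∈ D, opLE E C d) → opLE E C 0) ∧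
    ∀ d ∈ D, ∃ i₀ : ι, ∀ i : ι, i₀ ≤ i → opLE E (L - T i) d ∧ opLE E (T i - L) d

theorem inf_eq_zero_of_le_of_le {α : Type*} [Lattice α] [Zero α] {a b a' b' : α}
    (h : a ⊓ b = 0) (ha' : 0 ≤ a') (hb' : 0 ≤ b') (haa : a' ≤ a) (hbb : b' ≤ b) : a' ⊓ b' = 0 :=
  le_antisymm (h ▸ inf_le_inf haa hbb) (le_inf ha' hb')

theorem le_of_forall_le_add_of_isGLB {α : Type*} [AddCommGroup α] [PartialOrder α]
    [AddLeftMono α] {D : Set α} {a b : α} (hD : IsGLB D 0) (h : ∀ d ∈ D, a ≤ b + d) :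
    a ≤ b :=
  sub_nonpos.1 (hD.2 fun d hd => sub_le_iff_le_add'.2 (h d hd))

section LatticeOrderedGroup

variable {α : Type*} [Lattice α] [AddCommGroup α] [AddLeftMono α] {a b c : α}

theorem inf_add_le_inf_add_inf (ha : 0 ≤ a) (hb : 0 ≤ b) (hc : 0 ≤ c) :
    a ⊓ (b + c) ≤ a ⊓ b + a ⊓ c := by
  rw [← sub_le_iff_le_add, sub_inf]
  refine sup_le (le_inf ?_ ?_) (le_inf ?_ ?_)
  · exact (sub_nonpos.2 inf_le_left).trans ha
  · exact (sub_nonpos.2 inf_le_left).trans hb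
  · exact (sub_le_self _ hc).trans inf_le_left
  · exact sub_le_iff_le_add.2 inf_le_right

theorem add_inf_eq_zero (ha : 0 ≤ a) (hb : 0 ≤ b) (hc : 0 ≤ c) (hac : a ⊓ c = 0)
    (hbc : b ⊓ c = 0) : (a + b) ⊓ c = 0 := by
  refine le_antisymm ?_ (le_inf (add_nonneg ha hb) hc)
  calc (a + b) ⊓ c = c ⊓ (a + b) := inf_comm ..
    _ ≤ c ⊓ a + c ⊓ b := inf_add_le_inf_add_inf hc ha hb
    _ = 0 := by rw [inf_comm c, inf_comm c, hac, hbc, add_zero]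

theorem inf_nsmul_eq_zero (ha : 0 ≤ a) (hb : 0 ≤ b) (h : a ⊓ b = 0) (n : ℕ) :
    a ⊓ n • b = 0 := by
  induction n with
  | zero => simpa using inf_eq_right.2 ha
  | succ n ih =>
    rw [inf_comm] at ih h ⊢
    rw [succ_nsmul]
    exact add_inf_eq_zero (nsmul_nonneg hb n) hb ha ih h

theorem add_eq_sup_of_inf_eq_zero (h : a ⊓ b = 0) : a + b = a ⊔ b := by
  rw [← inf_add_sup, h, zero_add]

theorem posPart_sub_eq_self_of_inf_eq_zero (h : a ⊓ b = 0) : (a - b)⁺ = a := by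
  rw [posPart_def, ← sub_self b, ← sup_sub, ← add_eq_sup_of_inf_eq_zero h, add_sub_cancel_right]

theorem posPart_le_abs (a : α) : a⁺ ≤ |a| :=
  sup_le (le_abs_self a) (abs_nonneg a)

theorem posPart_le_posPart_add (h : a⁺ ⊓ |b| = 0) : a⁺ ≤ (a + b)⁺ := by
  suffices a⁺ - (a + b)⁺ ≤ a⁺ ⊓ |b| by rwa [h, sub_nonpos] at this
  refine le_inf (sub_le_self _ (posPart_nonneg _)) (sub_le_iff_le_add'.2 (sup_le ?_ ?_))
  · calc a = (a + b) + -b := by abel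
      _ ≤ (a + b)⁺ + |b| := add_le_add (le_posPart _) (neg_le_abs b)
  · exact add_nonneg (posPart_nonneg _) (abs_nonneg _)

end LatticeOrderedGroup

theorem abs_smul_le_abs_smul_of_abs_le {V : Type*} [AddCommGroup V] [Lattice V] [Module ℝ V]
    [PosSMulMono ℝ V] {c : ℝ} {z d : V} (h : |z| ≤ d) :
    |c • z| ≤ |c| • d := by
  rcases le_total 0 c with hc | hc
  · rw [abs_of_nonneg hc, abs_le']
    constructor
    · exact smul_le_smul_of_nonneg_left ((le_abs_self z).trans h) hc
    · simpa using smul_le_smul_of_nonneg_left ((neg_le_abs z).trans h) hc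
  · rw [abs_of_nonpos hc, abs_le']
    constructor
    · simpa using smul_le_smul_of_nonneg_left ((neg_le_abs z).trans h) (neg_nonneg.2 hc)
    · simpa using smul_le_smul_of_nonneg_left ((le_abs_self z).trans h) (neg_nonneg.2 hc)

section ConditionallyCompleteLatticeOrderedGroup

variable {α : Type*} [ConditionallyCompleteLattice α] [AddCommGroup α] {u v w x y z : α}

/-- For `u, z ≥ 0`, the component of `z` in the band generated by `u`. -/
noncomputable def bandComponent (u z : α) : α := ⨆ m : ℕ, z ⊓ m • u

theorem inf_nsmul_le_bandComponent (u z : α) (m : ℕ) : z ⊓ m • u ≤ bandComponent u z :=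
  le_ciSup (f := fun m : ℕ => z ⊓ m • u) ⟨z, Set.forall_mem_range.2 fun _ => inf_le_left⟩ m

theorem bandComponent_le_of_forall (h : ∀ m : ℕ, z ⊓ m • u ≤ v) : bandComponent u z ≤ v :=
  ciSup_le h

theorem bandComponent_le (u z : α) : bandComponent u z ≤ z :=
  bandComponent_le_of_forall fun _ => inf_le_left

theorem bandComponent_nonneg (hz : 0 ≤ z) : 0 ≤ bandComponent u z := by
  simpa [hz] using inf_nsmul_le_bandComponent u z 0

variable [AddLeftMono α]

theorem nonpos_of_forall_nsmul_le (h : ∀ n : ℕ, n • v ≤ w) : v ≤ 0 := by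
  have hbdd : BddAbove (Set.range fun n : ℕ => n • v) := ⟨w, Set.forall_mem_range.2 h⟩
  have : ⨆ n : ℕ, n • v ≤ (⨆ n : ℕ, n • v) - v :=
    ciSup_le fun n => le_sub_iff_add_le.2 (succ_nsmul v n ▸ le_ciSup hbdd (n + 1))
  simpa using this

theorem sub_bandComponent_inf_eq_zero (hu : 0 ≤ u) : (z - bandComponent u z) ⊓ u = 0 := by
  set t := (z - bandComponent u z) ⊓ u
  have ht : 0 ≤ t := le_inf (sub_nonneg.2 (bandComponent_le u z)) hu
  have : bandComponent u z ≤ bandComponent u z - t := by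
    refine bandComponent_le_of_forall fun m => le_sub_iff_add_le.2 ?_
    refine le_trans (le_inf ?_ ?_) (inf_nsmul_le_bandComponent u z (m + 1))
    · calc z ⊓ m • u + t ≤ bandComponent u z + (z - bandComponent u z) :=
            add_le_add (inf_nsmul_le_bandComponent u z m) inf_le_left
        _ = z := add_sub_cancel _ _
    · rw [succ_nsmul]
      exact add_le_add inf_le_right inf_le_right
  exact le_antisymm (by simpa using this) ht

theorem inf_bandComponent_eq_zero (hu : 0 ≤ u) (hz : 0 ≤ z) (hw : 0 ≤ w) (h : w ⊓ u = 0) :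
    w ⊓ bandComponent u z = 0 := by
  set q := w ⊓ bandComponent u z
  have hq : 0 ≤ q := le_inf hw (bandComponent_nonneg hz)
  have : bandComponent u z ≤ bandComponent u z - q := by
    refine bandComponent_le_of_forall fun m => le_sub_iff_add_le'.2 ?_
    have hdisj : q ⊓ (z ⊓ m • u) = 0 :=
      inf_eq_zero_of_le_of_le (inf_nsmul_eq_zero hw hu h m) hq
        (le_inf hz (nsmul_nonneg hu m)) inf_le_left inf_le_right
    rw [add_eq_sup_of_inf_eq_zero hdisj]
    exact sup_le inf_le_right (inf_nsmul_le_bandComponent u z m)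
  exact le_antisymm (by simpa using this) hq

theorem bandComponent_inf_sub_eq_zero (hu : 0 ≤ u) (hz : 0 ≤ z) :
    bandComponent u z ⊓ (z - bandComponent u z) = 0 := by
  rw [inf_comm]
  exact inf_bandComponent_eq_zero hu hz (sub_nonneg.2 (bandComponent_le u z))
    (sub_bandComponent_inf_eq_zero hu)

theorem posPart_add_sub_posPart_le_bandComponent (hx : 0 ≤ x) (a : α) :
    (a + x)⁺ - a⁺ ≤ bandComponent (a + x)⁺ x := by
  refine le_trans (le_inf ?_ ?_) (one_nsmul (a + x)⁺ ▸ inf_nsmul_le_bandComponent _ x 1)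
  · refine sub_le_iff_le_add.2 (sup_le ?_ (add_nonneg hx (posPart_nonneg a)))
    rw [add_comm x]
    exact add_le_add_left (le_posPart a) x
  · exact sub_le_self _ (posPart_nonneg a)

theorem bandComponent_le_posPart_add_sub_posPart (hx : 0 ≤ x) (a : α) :
    bandComponent a⁺ x ≤ (a + x)⁺ - a⁺ := by
  refine bandComponent_le_of_forall fun m => le_sub_iff_add_le.2 ?_
  set c := x ⊓ m • a⁺
  have hc : 0 ≤ c := le_inf hx (nsmul_nonneg (posPart_nonneg a) m)
  have hca : c ⊓ a⁻ = 0 := by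
    rw [inf_comm]
    exact inf_eq_zero_of_le_of_le
      (inf_nsmul_eq_zero (negPart_nonneg a) (posPart_nonneg a)
        (by rw [inf_comm]; exact posPart_inf_negPart_eq_zero a) m)
      (negPart_nonneg a) hc le_rfl inf_le_right
  have hsum : (c + a⁺) ⊓ a⁻ = 0 := add_inf_eq_zero hc (posPart_nonneg a) (negPart_nonneg a)
    hca (posPart_inf_negPart_eq_zero a)
  calc c + a⁺ = (c + a⁺ - a⁻)⁺ := (posPart_sub_eq_self_of_inf_eq_zero hsum).symm
    _ = (c + a)⁺ := by rw [add_sub_assoc, posPart_sub_negPart]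
    _ ≤ (a + x)⁺ := posPart_mono (by rw [add_comm a x]; exact add_le_add_left inf_le_left a)

open Finset in
theorem exists_nsmul_eq_sum_bandComponent_add (hy : 0 ≤ y) (hyx : y ≤ x) (n : ℕ) :
    ∃ r, 0 ≤ r ∧ r ≤ x ∧
      n • y = ∑ k ∈ range n, bandComponent (n • y - (k + 1) • x)⁺ x + r := by
  have hx : 0 ≤ x := hy.trans hyx
  set f : ℕ → α := fun k => (n • y - k • x)⁺
  have hf (k : ℕ) : f k = (n • y - (k + 1) • x + x)⁺ := by
    simp only [f, succ_nsmul]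
    abel_nf
  -- `f k - f (k + 1)` telescopes to `n • y` and lies between consecutive components of `x`.
  have hlow (k : ℕ) : bandComponent (f (k + 1)) x ≤ f k - f (k + 1) :=
    hf k ▸ bandComponent_le_posPart_add_sub_posPart hx _
  have hup (k : ℕ) : f k - f (k + 1) ≤ bandComponent (f k) x := by
    rw [hf k]
    exact posPart_add_sub_posPart_le_bandComponent hx _
  refine ⟨∑ k ∈ range n, (f k - f (k + 1) - bandComponent (f (k + 1)) x),
    sum_nonneg fun k _ => sub_nonneg.2 (hlow k), ?_, ?_⟩
  · calc _ ≤ ∑ k ∈ range n, (bandComponent (f k) x - bandComponent (f (k + 1)) x) :=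
          sum_le_sum fun k _ => sub_le_sub_right (hup k) _
      _ = bandComponent (f 0) x - bandComponent (f n) x := sum_range_sub' _ _
      _ ≤ x := (sub_le_self _ (bandComponent_nonneg hx)).trans (bandComponent_le _ _)
  · rw [sum_sub_distrib, sum_range_sub', add_sub_cancel]
    simp [f, nsmul_nonneg hy, nsmul_le_nsmul_right hyx]

end ConditionallyCompleteLatticeOrderedGroup

section Orthomorphism

variable {V : Type*} [AddCommGroup V] [ConditionallyCompleteLattice V] [Module ℝ V]
  {T : V →ₗ[ℝ] V} {p x y : V}

theorem IsBandPreserving.neg (hT : IsBandPreserving V T) : IsBandPreserving V (-T) := by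
  simpa [IsBandPreserving] using hT

theorem IsBandPreserving.abs_inf_abs_eq_zero (hT : IsBandPreserving V T) {a b : V}
    (h : |a| ⊓ |b| = 0) : |T a| ⊓ |T b| = 0 := by
  rw [inf_comm]
  exact hT b (T a) (by rw [inf_comm]; exact hT a b h)

variable [AddLeftMono V]

theorem IsOrderBoundedOp.neg (hT : IsOrderBoundedOp V T) : IsOrderBoundedOp V (-T) := by
  intro a b
  obtain ⟨c, d, hcd⟩ := hT a b
  exact ⟨-d, -c, fun x hax hxb => by simpa [and_comm] using hcd x hax hxb⟩

theorem IsOrthomorphism.neg (hT : IsOrthomorphism V T) : IsOrthomorphism V (-T) :=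
  ⟨hT.1.neg, hT.2.neg⟩

theorem IsBandPreserving.le_posPart_of_abs_inf_abs_sub_eq_zero (hT : IsBandPreserving V T)
    (h : |p| ⊓ |x - p| = 0) : T p ≤ (T x)⁺ := by
  have hdisj : (T p)⁺ ⊓ |T (x - p)| = 0 :=
    inf_eq_zero_of_le_of_le (hT.abs_inf_abs_eq_zero h) (posPart_nonneg _) (abs_nonneg _)
      (posPart_le_abs _) le_rfl
  calc T p ≤ (T p)⁺ := le_posPart _
    _ ≤ (T p + T (x - p))⁺ := posPart_le_posPart_add hdisj
    _ = (T x)⁺ := by rw [← map_add, add_sub_cancel]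

theorem IsOrthomorphism.le_posPart (hT : IsOrthomorphism V T) (hy : 0 ≤ y) (hyx : y ≤ x) :
    T y ≤ (T x)⁺ := by
  have hx : 0 ≤ x := hy.trans hyx
  obtain ⟨_, d, hd⟩ := hT.1 0 x
  refine sub_nonpos.1 (nonpos_of_forall_nsmul_le (w := d) fun n => ?_)
  obtain ⟨r, hr, hrx, hny⟩ := exists_nsmul_eq_sum_bandComponent_add hy hyx n
  have hcomp (u : V) (hu : 0 ≤ u) : T (bandComponent u x) ≤ (T x)⁺ := by
    refine hT.2.le_posPart_of_abs_inf_abs_sub_eq_zero ?_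
    rw [abs_of_nonneg (bandComponent_nonneg hx),
      abs_of_nonneg (sub_nonneg.2 (bandComponent_le u x))]
    exact bandComponent_inf_sub_eq_zero hu hx
  rw [nsmul_sub, ← map_nsmul, hny, map_add, map_sum, sub_le_iff_le_add']
  refine add_le_add ?_ (hd r hr hrx).2
  exact (Finset.sum_le_sum fun k _ => hcomp _ (posPart_nonneg _)).trans_eq (by simp)

theorem IsOrthomorphism.abs_le (hT : IsOrthomorphism V T) (hy : 0 ≤ y) (hyx : y ≤ x) :
    |T y| ≤ |T x| := by
  refine abs_le'.2 ⟨(hT.le_posPart hy hyx).trans (posPart_le_abs _), ?_⟩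
  simpa using (hT.neg.le_posPart hy hyx).trans (posPart_le_abs _)

theorem IsOrthomorphism.abs_le_add_of_abs_le (hT : IsOrthomorphism V T) (h : |y| ≤ x) :
    |T y| ≤ |T x| + |T x| := by
  have hneg : y⁻ ≤ |y| := by simpa using posPart_le_abs (-y)
  calc |T y| = |T y⁺ + -T y⁻| := by
        rw [← map_neg, ← map_add, ← sub_eq_add_neg, posPart_sub_negPart]
    _ ≤ |T y⁺| + |T y⁻| := by simpa using abs_add_le (T y⁺) (-T y⁻)
    _ ≤ |T x| + |T x| := add_le_add (hT.abs_le (posPart_nonneg y) ((posPart_le_abs y).trans h))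
        (hT.abs_le (negPart_nonneg y) (hneg.trans h))

end Orthomorphism

namespace OrderConvNet

open scoped Pointwise

variable {V : Type*} [AddCommGroup V] [ConditionallyCompleteLattice V] [AddLeftMono V]
  {ι : Type*} [Preorder ι] {y y' : ι → V} {l l' : V}

theorem le_of_frequently_le_add {a b : V} (h : OrderConvNet V y l)
    (H : ∀ i₀, ∃ i, i₀ ≤ i ∧ a ≤ b + |y i - l|) : a ≤ b := by
  obtain ⟨D, -, -, hD, hev⟩ := h
  refine le_of_forall_le_add_of_isGLB hD fun d hd => ?_
  obtain ⟨i₀, hi₀⟩ := hev d hd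
  obtain ⟨i, hi, hab⟩ := H i₀
  exact hab.trans (add_le_add_right (hi₀ i hi) b)

theorem abs_le_of_forall_abs_le {c : V} (h : OrderConvNet V y l) (H : ∀ i, |y i| ≤ c) :
    |l| ≤ c := by
  refine h.le_of_frequently_le_add fun i => ⟨i, le_rfl, ?_⟩
  calc |l| ≤ |y i| + |l - y i| := by simpa using abs_add_le (y i) (l - y i)
    _ ≤ c + |y i - l| := by rw [abs_sub_comm]; exact add_le_add (H i) le_rfl

theorem abs_inf_eq_zero_of_forall {z : V} (h : OrderConvNet V y l)
    (H : ∀ i, |y i| ⊓ |z| = 0) : |l| ⊓ |z| = 0 := by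
  refine le_antisymm (h.le_of_frequently_le_add fun i => ⟨i, le_rfl, ?_⟩)
    (le_inf (abs_nonneg _) (abs_nonneg _))
  calc |l| ⊓ |z| = |l| ⊓ |z| - |y i| ⊓ |z| := by rw [H i, sub_zero]
    _ ≤ |l - y i| :=
        (le_abs_self _).trans ((abs_inf_sub_inf_le_abs _ _ _).trans (abs_abs_sub_abs_le _ _))
    _ = 0 + |y i - l| := by rw [zero_add, abs_sub_comm]

theorem unique [IsDirected ι (· ≤ ·)] (h : OrderConvNet V y l) (h' : OrderConvNet V y l') :
    l = l' := by
  have key : ∀ {l l' : V}, OrderConvNet V y l → OrderConvNet V y l' → l ≤ l' := by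
    intro l l' h h'
    obtain ⟨D', -, -, hD', hev'⟩ := h'
    rw [← sub_nonpos]
    refine le_of_forall_le_add_of_isGLB hD' fun d' hd' => ?_
    obtain ⟨i₁, hi₁⟩ := hev' d' hd'
    rw [zero_add]
    refine h.le_of_frequently_le_add fun i₀ => ?_
    obtain ⟨i, hi₀, hi⟩ := directed_of (· ≤ ·) i₀ i₁
    refine ⟨i, hi₀, ?_⟩
    calc l - l' = (y i - l') + -(y i - l) := by abel
      _ ≤ d' + |y i - l| := add_le_add ((le_abs_self _).trans (hi₁ i hi)) (neg_le_abs _)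
  exact le_antisymm (key h h') (key h' h)

theorem add [IsDirected ι (· ≤ ·)] (h : OrderConvNet V y l) (h' : OrderConvNet V y' l') :
    OrderConvNet V (fun i => y i + y' i) (l + l') := by
  obtain ⟨D, hne, hdir, hD, hev⟩ := h
  obtain ⟨D', hne', hdir', hD', hev'⟩ := h'
  refine ⟨D + D', hne.add hne', ?_, by simpa using hD.add hD', ?_⟩
  · rintro _ ⟨d₁, hd₁, d₁', hd₁', rfl⟩ _ ⟨d₂, hd₂, d₂', hd₂', rfl⟩
    obtain ⟨d, hd, h₁, h₂⟩ := hdir d₁ hd₁ d₂ hd₂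
    obtain ⟨d', hd', h₁', h₂'⟩ := hdir' d₁' hd₁' d₂' hd₂'
    exact ⟨d + d', Set.add_mem_add hd hd', add_le_add h₁ h₁', add_le_add h₂ h₂'⟩
  · rintro _ ⟨d, hd, d', hd', rfl⟩
    obtain ⟨i₀, hi₀⟩ := hev d hd
    obtain ⟨i₁, hi₁⟩ := hev' d' hd'
    obtain ⟨j, hj₀, hj₁⟩ := directed_of (· ≤ ·) i₀ i₁
    refine ⟨j, fun i hi => ?_⟩
    calc |y i + y' i - (l + l')| = |(y i - l) + (y' i - l')| := by abel_nf
      _ ≤ |y i - l| + |y' i - l'| := abs_add_le _ _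
      _ ≤ d + d' := add_le_add (hi₀ i (hj₀.trans hi)) (hi₁ i (hj₁.trans hi))

theorem const_smul [Module ℝ V] [PosSMulMono ℝ V] (c : ℝ) (h : OrderConvNet V y l) :
    OrderConvNet V (fun i => c • y i) (c • l) := by
  obtain ⟨D, hne, hdir, hD, hev⟩ := h
  have hc : 0 < |c| + 1 := by positivity
  set φ := OrderIso.smulRight (β := V) hc
  refine ⟨φ '' D, hne.image _, ?_, by simpa [φ] using φ.isGLB_image'.2 hD, ?_⟩
  · rintro _ ⟨d₁, hd₁, rfl⟩ _ ⟨d₂, hd₂, rfl⟩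
    obtain ⟨d, hd, h₁, h₂⟩ := hdir d₁ hd₁ d₂ hd₂
    exact ⟨φ d, Set.mem_image_of_mem _ hd, φ.monotone h₁, φ.monotone h₂⟩
  · rintro _ ⟨d, hd, rfl⟩
    obtain ⟨i₀, hi₀⟩ := hev d hd
    refine ⟨i₀, fun i hi => ?_⟩
    calc |c • y i - c • l| = |c • (y i - l)| := by rw [smul_sub]
      _ ≤ |c| • d := abs_smul_le_abs_smul_of_abs_le (hi₀ i hi)
      _ ≤ |c| • d + d := le_add_of_nonneg_right ((abs_nonneg _).trans (hi₀ i hi))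
      _ = φ d := by simp [φ, add_smul]

theorem exists_forall_abs_le {y : ℕ → V} (h : OrderConvNet V y l) : ∃ U, ∀ n, |y n| ≤ U := by
  obtain ⟨D, ⟨d, hd⟩, -, -, hev⟩ := h
  obtain ⟨n₀, hn₀⟩ := hev d hd
  obtain ⟨B, hB⟩ := ((Set.finite_lt_nat n₀).image fun n => |y n|).bddAbove
  refine ⟨B ⊔ (|l| + d), fun n => ?_⟩
  rcases lt_or_ge n n₀ with hn | hn
  · exact le_sup_of_le_left (hB ⟨n, hn, rfl⟩)
  · refine le_sup_of_le_right ?_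
    calc |y n| ≤ |l| + |y n - l| := by simpa using abs_add_le l (y n - l)
      _ ≤ |l| + d := add_le_add le_rfl (hn₀ n hn)

end OrderConvNet

/-- if `(T n)` is a sequence of orthomorphisms of a Dedekind complete vector
lattice such that `(T n x)` is order convergent for every `x`, then the pointwise order
limit defines an orthomorphism. -/
theorem stmt4
    (T : ℕ → E →ₗ[ℝ] E) (hT : ∀ n, IsOrthomorphism E (T n))
    (L : E → E) (hconv : ∀ x : E, OrderConvNet E (fun n => T n x) (L x)) :
    ∃ L' : E →ₗ[ℝ] E, (∀ x : E, L' x = L x) ∧ IsOrthomorphism E L' := by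
  let L' : E →ₗ[ℝ] E :=
    { toFun := L
      map_add' := fun x z => (hconv (x + z)).unique (by simpa using (hconv x).add (hconv z))
      map_smul' := fun c x => (hconv (c • x)).unique (by simpa using (hconv x).const_smul c) }
  refine ⟨L', fun _ => rfl, fun a b => ?_, fun x z hxz => ?_⟩
  · obtain ⟨U, hU⟩ := (hconv (|a| ⊔ |b|)).exists_forall_abs_le
    refine ⟨-(U + U), U + U, fun x hax hxb => ?_⟩
    have hx : |x| ≤ |a| ⊔ |b| := abs_le'.2
      ⟨hxb.trans ((le_abs_self b).trans le_sup_right),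
        (neg_le_neg_iff.2 hax).trans ((neg_le_abs a).trans le_sup_left)⟩
    have hLx : |L x| ≤ U + U := (hconv x).abs_le_of_forall_abs_le fun n =>
      ((hT n).abs_le_add_of_abs_le hx).trans (add_le_add (hU n) (hU n))
    exact ⟨(neg_le_neg_iff.2 ((neg_le_abs _).trans hLx)).trans_eq (neg_neg _),
      (le_abs_self _).trans hLx⟩
  · exact (hconv x).abs_inf_eq_zero_of_forall fun n => (hT n).2 x z hxz
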